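/- Let η = (K1, K2, K3, K4, κ3, κ6, κ9, κ12) be a tuple of positive real parameters with a(η) > 0 and b(η) < 0. If −b(η) ≤ 4·(K1·K2·K3·K4·κ3·κ6·κ9·κ12)^{1/4}·(2·a(η))^{1/2} + 3·(K1·K2·K3·K4·κ3·κ6^2·κ9^2·κ12)^{1/3}·(K2^{−1}·(K2·K4)^{1/3} + K3^{−1}·(K1·K3)^{1/3}), then p_{η,H}(x1,x3) ≥ 0 for all x1 > 0, x3 > 0. -/

import Mathlib

/-!
Write `M = K1 K2 K3 κ3 κ6 κ12`. The monomial `M b(η) x1² x3` is the only one of `p_{η,H}` whose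
coefficient can be negative, and the remaining terms fall into three groups, each dominating a
multiple of `M x1² x3` by the arithmetic–geometric mean inequality. One group factors as
`(a K2 κ3 (x1 x3)² + K1² K3 κ6² κ12) (K2 K4 κ3 κ9 x1² + K2 K3 κ3 κ12 x1 + K1 K3 κ6 κ12)`;
AM-GM on the outer terms of the second factor, and then on both factors, bounds it below by
`4 M (K1 K2 K3 K4 κ3 κ6 κ9 κ12)^{1/4} (2a)^{1/2} x1² x3`. The other two groups have the shape
`2u + v`, and `2u + v ≥ 3 (u² v)^{1/3}` yields the two summands of the `1/3`-power term.
The hypothesis on `-b(η)` says exactly that these lower bounds absorb the negative monomial.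
-/

lemma two_mul_le_add_of_sq_eq {u v c : ℝ} (hu : 0 ≤ u) (hv : 0 ≤ v) (h : c ^ 2 = u * v) :
    2 * c ≤ u + v := by
  nlinarith [sq_nonneg (u - v), sq_nonneg (u + v - 2 * c)]

lemma four_mul_le_add_mul_add_of_sq_eq {u₁ v₁ u₂ v₂ c : ℝ} (hu₁ : 0 ≤ u₁) (hv₁ : 0 ≤ v₁)
    (hu₂ : 0 ≤ u₂) (hv₂ : 0 ≤ v₂) (h : c ^ 2 = u₁ * v₁ * (u₂ * v₂)) :
    4 * c ≤ (u₁ + v₁) * (u₂ + v₂) := by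
  set s₁ := √(u₁ * v₁)
  set s₂ := √(u₂ * v₂)
  have hs₁ : 2 * s₁ ≤ u₁ + v₁ :=
    two_mul_le_add_of_sq_eq hu₁ hv₁ (Real.sq_sqrt (mul_nonneg hu₁ hv₁))
  have hs₂ : 2 * s₂ ≤ u₂ + v₂ :=
    two_mul_le_add_of_sq_eq hu₂ hv₂ (Real.sq_sqrt (mul_nonneg hu₂ hv₂))
  have hc : c ≤ s₁ * s₂ := by
    refine (le_abs_self c).trans (abs_le_of_sq_le_sq (le_of_eq ?_) (by positivity))
    rw [h, mul_pow, Real.sq_sqrt (mul_nonneg hu₁ hv₁), Real.sq_sqrt (mul_nonneg hu₂ hv₂)]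
  calc 4 * c ≤ (2 * s₁) * (2 * s₂) := by linarith
    _ ≤ (u₁ + v₁) * (u₂ + v₂) := mul_le_mul hs₁ hs₂ (by positivity) (by positivity)

lemma three_mul_le_two_mul_add_of_pow_three_eq {u v c : ℝ} (hu : 0 ≤ u) (hv : 0 ≤ v)
    (h : c ^ 3 = u ^ 2 * v) : 3 * c ≤ 2 * u + v := by
  rcases le_or_gt c 0 with hc | hc
  · linarith
  -- `(2u + v)³ - 27 u² v = (u - v)² (8u + v)`
  have hcube : (3 * c) ^ 3 ≤ (2 * u + v) ^ 3 := by
    nlinarith [mul_nonneg (sq_nonneg (u - v)) (by linarith : 0 ≤ 8 * u + v)]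
  exact le_of_pow_le_pow_left₀ three_ne_zero (by linarith) hcube

lemma rpow_one_div_pow_self {x : ℝ} (hx : 0 ≤ x) {n : ℕ} (hn : n ≠ 0) :
    (x ^ ((1 : ℝ) / n)) ^ n = x := by
  rw [one_div, Real.rpow_inv_natCast_pow hx hn]

lemma threeCircuit_le {M N k R E X u v : ℝ} (hk : k ≠ 0) (hM : M = k * N) (hR : 0 ≤ R)
    (hE : 0 ≤ E) (hu : 0 ≤ u) (hv : 0 ≤ v) (h : u ^ 2 * v = N ^ 3 * R * E * X ^ 3) :
    M * (3 * R ^ ((1 : ℝ) / 3) * (k⁻¹ * E ^ ((1 : ℝ) / 3))) * X ≤ 2 * u + v := by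
  have hR3 : (R ^ ((1 : ℝ) / 3)) ^ 3 = R := mod_cast rpow_one_div_pow_self hR three_ne_zero
  have hE3 : (E ^ ((1 : ℝ) / 3)) ^ 3 = E := mod_cast rpow_one_div_pow_self hE three_ne_zero
  calc M * (3 * R ^ ((1 : ℝ) / 3) * (k⁻¹ * E ^ ((1 : ℝ) / 3))) * X
        = 3 * (R ^ ((1 : ℝ) / 3) * E ^ ((1 : ℝ) / 3) * N * X) := by
        rw [hM]; field_simp
    _ ≤ 2 * u + v := three_mul_le_two_mul_add_of_pow_three_eq hu hv <| by
        rw [mul_pow, mul_pow, mul_pow, hR3, hE3, h]; ring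

/-- The bivariate polynomial `p_{η,H}` supported on the hexagonal face `H`. -/
def pEtaH (K1 K2 K3 K4 κ3 κ6 κ9 κ12 x1 x3 : ℝ) : ℝ :=
  K2 * κ3 * (κ3 * κ12 - κ6 * κ9) *
      (K2 * K4 * κ3 * κ9 * x1 ^ 4 * x3 ^ 2 + K1 * K3 * κ6 * κ12 * x1 ^ 2 * x3 ^ 2
        + K2 * K3 * κ3 * κ12 * x1 ^ 3 * x3 ^ 2)
    + K1 * K2 * K3 * κ3 * κ6 * κ12 * ((K2 + K3) * κ3 * κ12 - (K1 + K4) * κ6 * κ9)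
        * x1 ^ 2 * x3
    + K1 * κ6 *
        (K2 ^ 2 * K4 * κ3 ^ 2 * κ9 ^ 2 * x1 ^ 4 * x3
          + 2 * K2 * K3 * K4 * κ3 ^ 2 * κ9 * κ12 * x1 ^ 3 * x3
          + K1 * K2 * K3 * K4 * κ3 * κ6 * κ9 * κ12 * x1 ^ 2
          + 2 * K1 * K2 * K3 * κ3 * κ6 * κ12 ^ 2 * x1 * x3
          + K1 * K2 * K3 ^ 2 * κ3 * κ6 * κ12 ^ 2 * x1
          + K1 * K3 ^ 2 * κ6 ^ 2 * κ12 ^ 2 * x3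
          + K1 ^ 2 * K3 ^ 2 * κ6 ^ 2 * κ12 ^ 2)

section Cover

variable {K1 K2 K3 K4 κ3 κ6 κ9 κ12 : ℝ}

lemma pEtaH_eq_add_circuits (x1 x3 : ℝ) :
    pEtaH K1 K2 K3 K4 κ3 κ6 κ9 κ12 x1 x3 =
      K1 * K2 * K3 * κ3 * κ6 * κ12 * ((K2 + K3) * κ3 * κ12 - (K1 + K4) * κ6 * κ9)
          * (x1 ^ 2 * x3)
        + ((κ3 * κ12 - κ6 * κ9) * K2 * κ3 * (x1 * x3) ^ 2 + K1 ^ 2 * K3 * κ6 ^ 2 * κ12)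
          * (K2 * K4 * κ3 * κ9 * x1 ^ 2 + K2 * K3 * κ3 * κ12 * x1 + K1 * K3 * κ6 * κ12)
        + (2 * (K1 * K2 * K3 * K4 * κ3 ^ 2 * κ6 * κ9 * κ12 * x1 ^ 3 * x3)
          + K1 ^ 2 * K3 ^ 2 * κ6 ^ 3 * κ12 ^ 2 * x3)
        + (2 * (K1 ^ 2 * K2 * K3 * κ3 * κ6 ^ 2 * κ12 ^ 2 * x1 * x3)
          + K1 * K2 ^ 2 * K4 * κ3 ^ 2 * κ6 * κ9 ^ 2 * x1 ^ 4 * x3) := by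
  unfold pEtaH
  ring

lemma fourCircuit_le (hK1 : 0 < K1) (hK2 : 0 < K2) (hK3 : 0 < K3) (hK4 : 0 < K4)
    (hκ3 : 0 < κ3) (hκ6 : 0 < κ6) (hκ9 : 0 < κ9) (hκ12 : 0 < κ12)
    (ha : 0 ≤ κ3 * κ12 - κ6 * κ9) {x1 : ℝ} (hx1 : 0 ≤ x1) (x3 : ℝ) :
    K1 * K2 * K3 * κ3 * κ6 * κ12
        * (4 * (K1 * K2 * K3 * K4 * κ3 * κ6 * κ9 * κ12) ^ ((1 : ℝ) / 4)
          * (2 * (κ3 * κ12 - κ6 * κ9)) ^ ((1 : ℝ) / 2)) * (x1 ^ 2 * x3) ≤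
      ((κ3 * κ12 - κ6 * κ9) * K2 * κ3 * (x1 * x3) ^ 2 + K1 ^ 2 * K3 * κ6 ^ 2 * κ12)
        * (K2 * K4 * κ3 * κ9 * x1 ^ 2 + K2 * K3 * κ3 * κ12 * x1 + K1 * K3 * κ6 * κ12) := by
  have hr : ((K1 * K2 * K3 * K4 * κ3 * κ6 * κ9 * κ12) ^ ((1 : ℝ) / 4)) ^ 4 =
      K1 * K2 * K3 * K4 * κ3 * κ6 * κ9 * κ12 := by
    exact_mod_cast rpow_one_div_pow_self (by positivity) four_ne_zero
  have hs : ((2 * (κ3 * κ12 - κ6 * κ9)) ^ ((1 : ℝ) / 2)) ^ 2 = 2 * (κ3 * κ12 - κ6 * κ9) := by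
    exact_mod_cast rpow_one_div_pow_self (by positivity) two_ne_zero
  set r := (K1 * K2 * K3 * K4 * κ3 * κ6 * κ9 * κ12) ^ ((1 : ℝ) / 4)
  set s := (2 * (κ3 * κ12 - κ6 * κ9)) ^ ((1 : ℝ) / 2)
  set M := K1 * K2 * K3 * κ3 * κ6 * κ12
  have hQ : K2 * K3 * κ3 * κ12 * x1 + 2 * r ^ 2 * x1 ≤
      K2 * K4 * κ3 * κ9 * x1 ^ 2 + K2 * K3 * κ3 * κ12 * x1 + K1 * K3 * κ6 * κ12 := by
    have := two_mul_le_add_of_sq_eq (u := K2 * K4 * κ3 * κ9 * x1 ^ 2) (v := K1 * K3 * κ6 * κ12)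
      (c := r ^ 2 * x1) (by positivity) (by positivity) (by linear_combination x1 ^ 2 * hr)
    linarith
  calc M * (4 * r * s) * (x1 ^ 2 * x3) = 4 * (M * r * s * (x1 ^ 2 * x3)) := by ring
    _ ≤ ((κ3 * κ12 - κ6 * κ9) * K2 * κ3 * (x1 * x3) ^ 2 + K1 ^ 2 * K3 * κ6 ^ 2 * κ12)
        * (K2 * K3 * κ3 * κ12 * x1 + 2 * r ^ 2 * x1) :=
      four_mul_le_add_mul_add_of_sq_eq (by positivity) (by positivity) (by positivity)
        (by positivity) (by linear_combination (M * r * (x1 ^ 2 * x3)) ^ 2 * hs)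
    _ ≤ _ := mul_le_mul_of_nonneg_left hQ (by positivity)

lemma threeCircuit_K2_le (hK1 : 0 < K1) (hK2 : 0 < K2) (hK3 : 0 < K3) (hK4 : 0 < K4)
    (hκ3 : 0 < κ3) (hκ6 : 0 < κ6) (hκ9 : 0 < κ9) (hκ12 : 0 < κ12)
    {x1 x3 : ℝ} (hx1 : 0 ≤ x1) (hx3 : 0 ≤ x3) :
    K1 * K2 * K3 * κ3 * κ6 * κ12
        * (3 * (K1 * K2 * K3 * K4 * κ3 * κ6 ^ 2 * κ9 ^ 2 * κ12) ^ ((1 : ℝ) / 3)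
          * (K2⁻¹ * (K2 * K4) ^ ((1 : ℝ) / 3))) * (x1 ^ 2 * x3) ≤
      2 * (K1 * K2 * K3 * K4 * κ3 ^ 2 * κ6 * κ9 * κ12 * x1 ^ 3 * x3)
        + K1 ^ 2 * K3 ^ 2 * κ6 ^ 3 * κ12 ^ 2 * x3 :=
  threeCircuit_le (N := K1 * K3 * κ3 * κ6 * κ12) hK2.ne' (by ring) (by positivity) (by positivity)
    (by positivity) (by positivity) (by ring)

lemma threeCircuit_K3_le (hK1 : 0 < K1) (hK2 : 0 < K2) (hK3 : 0 < K3) (hK4 : 0 < K4)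
    (hκ3 : 0 < κ3) (hκ6 : 0 < κ6) (hκ9 : 0 < κ9) (hκ12 : 0 < κ12)
    {x1 x3 : ℝ} (hx1 : 0 ≤ x1) (hx3 : 0 ≤ x3) :
    K1 * K2 * K3 * κ3 * κ6 * κ12
        * (3 * (K1 * K2 * K3 * K4 * κ3 * κ6 ^ 2 * κ9 ^ 2 * κ12) ^ ((1 : ℝ) / 3)
          * (K3⁻¹ * (K1 * K3) ^ ((1 : ℝ) / 3))) * (x1 ^ 2 * x3) ≤
      2 * (K1 ^ 2 * K2 * K3 * κ3 * κ6 ^ 2 * κ12 ^ 2 * x1 * x3)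
        + K1 * K2 ^ 2 * K4 * κ3 ^ 2 * κ6 * κ9 ^ 2 * x1 ^ 4 * x3 :=
  threeCircuit_le (N := K1 * K2 * κ3 * κ6 * κ12) hK3.ne' (by ring) (by positivity) (by positivity)
    (by positivity) (by positivity) (by ring)

end Cover

theorem pEtaH_nonneg_of_cover4_general
    (K1 K2 K3 K4 κ3 κ6 κ9 κ12 : ℝ)
    (hK1 : 0 < K1) (hK2 : 0 < K2) (hK3 : 0 < K3) (hK4 : 0 < K4)
    (hκ3 : 0 < κ3) (hκ6 : 0 < κ6) (hκ9 : 0 < κ9) (hκ12 : 0 < κ12)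
    (ha : 0 < κ3 * κ12 - κ6 * κ9)
    (hcond : -((K2 + K3) * κ3 * κ12 - (K1 + K4) * κ6 * κ9) ≤
      4 * (K1 * K2 * K3 * K4 * κ3 * κ6 * κ9 * κ12) ^ ((1 : ℝ) / 4)
          * (2 * (κ3 * κ12 - κ6 * κ9)) ^ ((1 : ℝ) / 2)
        + 3 * (K1 * K2 * K3 * K4 * κ3 * κ6 ^ 2 * κ9 ^ 2 * κ12) ^ ((1 : ℝ) / 3)
            * (K2⁻¹ * (K2 * K4) ^ ((1 : ℝ) / 3) + K3⁻¹ * (K1 * K3) ^ ((1 : ℝ) / 3))) :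
    ∀ x1 x3 : ℝ, 0 < x1 → 0 < x3 → 0 ≤ pEtaH K1 K2 K3 K4 κ3 κ6 κ9 κ12 x1 x3 := by
  intro x1 x3 hx1 hx3
  have hA := fourCircuit_le hK1 hK2 hK3 hK4 hκ3 hκ6 hκ9 hκ12 ha.le hx1.le x3
  have hB := threeCircuit_K2_le hK1 hK2 hK3 hK4 hκ3 hκ6 hκ9 hκ12 hx1.le hx3.le
  have hC := threeCircuit_K3_le hK1 hK2 hK3 hK4 hκ3 hκ6 hκ9 hκ12 hx1.le hx3.le
  have hM : 0 ≤ K1 * K2 * K3 * κ3 * κ6 * κ12 * (x1 ^ 2 * x3) := by positivity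
  rw [pEtaH_eq_add_circuits]
  linarith [mul_nonneg hM (neg_le_iff_add_nonneg.mp hcond)]

/-- Sufficient condition for nonnegativity of `p_{η,H}` on the positive
orthant coming from the pure cover. -/
theorem pEtaH_nonneg_of_cover4
    (K1 K2 K3 K4 κ3 κ6 κ9 κ12 : ℝ)
    (hK1 : 0 < K1) (hK2 : 0 < K2) (hK3 : 0 < K3) (hK4 : 0 < K4)
    (hκ3 : 0 < κ3) (hκ6 : 0 < κ6) (hκ9 : 0 < κ9) (hκ12 : 0 < κ12)
    (ha : 0 < κ3 * κ12 - κ6 * κ9)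
    (hb : (K2 + K3) * κ3 * κ12 - (K1 + K4) * κ6 * κ9 < 0)
    (hcond : -((K2 + K3) * κ3 * κ12 - (K1 + K4) * κ6 * κ9) ≤
      4 * (K1 * K2 * K3 * K4 * κ3 * κ6 * κ9 * κ12) ^ ((1 : ℝ) / 4)
          * (2 * (κ3 * κ12 - κ6 * κ9)) ^ ((1 : ℝ) / 2)
        + 3 * (K1 * K2 * K3 * K4 * κ3 * κ6 ^ 2 * κ9 ^ 2 * κ12) ^ ((1 : ℝ) / 3)
            * (K2⁻¹ * (K2 * K4) ^ ((1 : ℝ) / 3) + K3⁻¹ * (K1 * K3) ^ ((1 : ℝ) / 3))) :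
    ∀ x1 x3 : ℝ, 0 < x1 → 0 < x3 → 0 ≤ pEtaH K1 K2 K3 K4 κ3 κ6 κ9 κ12 x1 x3 :=
  pEtaH_nonneg_of_cover4_general K1 K2 K3 K4 κ3 κ6 κ9 κ12 hK1 hK2 hK3 hK4 hκ3 hκ6 hκ9 hκ12 ha hcond
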